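/- arXiv:2512.08034 — 2 statements merged into one kernel-verified Lean document; each statement's English description precedes it below -/
import Mathlib

section
/- Gaussian reproduction lemma (multivariate): for positive definite covariance matrices C1 (n×n) and C2 (m×m), a matrix A ∈ ℝ^{m×n}, and vectors μ1 ∈ ℝ^n, μ2 ∈ ℝ^m, the pointwise product of Gaussian densities satisfies N(x|μ1,C1)·N(Ax|μ2,C2) = N(μ2|Aμ1, A C1 Aᵀ + C2)·N(x|μ3,C3) for all x ∈ ℝ^n, where C3 = (C1^{-1} + Aᵀ C2^{-1} A)^{-1} and μ3 = C3(C1^{-1}μ1 + Aᵀ C2^{-1} μ2). -/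
open Matrix Real

/-- The multivariate Gaussian density `N(x | μ, C)`. -/
noncomputable def gaussPDF {d : ℕ} (μ : Fin d → ℝ) (C : Matrix (Fin d) (Fin d) ℝ)
    (x : Fin d → ℝ) : ℝ :=
  (2 * π) ^ (-(d : ℝ) / 2) * C.det ^ (-(1 : ℝ) / 2) *
    Real.exp (-((x - μ) ⬝ᵥ (C⁻¹ *ᵥ (x - μ))) / 2)

/-! Write `K = C₁⁻¹ + Aᵀ C₂⁻¹ A` and `M = A C₁ Aᵀ + C₂`. The equation `K μ₃ = C₁⁻¹ μ₁ + Aᵀ C₂⁻¹ μ₂`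
says `C₁⁻¹ (μ₃ - μ₁) = Aᵀ C₂⁻¹ (μ₂ - A μ₃)`. Expanding both exponents around `μ₃`, the cross terms
cancel by this relation, and what is left besides the quadratic form of `K` is `r ⬝ w` with
`r = μ₂ - A μ₁` and `w = C₂⁻¹ (μ₂ - A μ₃)`; the same relation gives `M w = r`. The normalising
constants match because the Weinstein–Aronszajn identity `det (1 + X Y) = det (1 + Y X)` gives
`det M = det C₂ · det K · det C₁`. -/

namespace Matrix

variable {R : Type*} [CommRing R] {m n : Type*} [Fintype m] [Fintype n]

theorem mulVec_sub_eq_of_add_mul_mul_mulVec_eq {S₁ : Matrix n n R} {S₂ : Matrix m m R}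
    {A : Matrix m n R} {B : Matrix n m R} {μ μ₁ : n → R} {μ₂ : m → R}
    (h : (S₁ + B * S₂ * A) *ᵥ μ = S₁ *ᵥ μ₁ + B *ᵥ (S₂ *ᵥ μ₂)) :
    S₁ *ᵥ (μ - μ₁) = B *ᵥ (S₂ *ᵥ (μ₂ - A *ᵥ μ)) := by
  simp only [add_mulVec, ← mulVec_mulVec] at h
  simp only [mulVec_sub]
  linear_combination h

theorem dotProduct_mulVec_add_dotProduct_mulVec_eq {S₁ : Matrix n n R} {S₂ : Matrix m m R}
    (hS₁ : S₁.IsSymm) (hS₂ : S₂.IsSymm) (A : Matrix m n R) (u e₁ : n → R) {e₂ : m → R}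
    (h : S₁ *ᵥ e₁ = Aᵀ *ᵥ (S₂ *ᵥ e₂)) :
    (u + e₁) ⬝ᵥ S₁ *ᵥ (u + e₁) + (A *ᵥ u - e₂) ⬝ᵥ S₂ *ᵥ (A *ᵥ u - e₂) =
      (A *ᵥ e₁ + e₂) ⬝ᵥ S₂ *ᵥ e₂ + u ⬝ᵥ (S₁ + Aᵀ * S₂ * A) *ᵥ u := by
  have transpose_mulVec (v : n → R) (w : m → R) : v ⬝ᵥ Aᵀ *ᵥ w = (A *ᵥ v) ⬝ᵥ w := by
    rw [dotProduct_mulVec, vecMul_transpose]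
  have symm₁ := hS₁.eq ▸ dotProduct_transpose_mulVec S₁
  have symm₂ := hS₂.eq ▸ dotProduct_transpose_mulVec S₂
  have cross (v : n → R) : v ⬝ᵥ S₁ *ᵥ e₁ = (A *ᵥ v) ⬝ᵥ S₂ *ᵥ e₂ := by
    rw [h, transpose_mulVec]
  simp only [add_mulVec, ← mulVec_mulVec, mulVec_add, mulVec_sub, dotProduct_add, add_dotProduct,
    dotProduct_sub, sub_dotProduct, transpose_mulVec]
  linear_combination 2 * cross u + symm₁ e₁ u + cross e₁ - symm₂ e₂ (A *ᵥ u)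

variable [DecidableEq m] [DecidableEq n]

theorem det_mul_mul_add {C₁ : Matrix n n R} {C₂ : Matrix m m R} (hC₁ : IsUnit C₁.det)
    (hC₂ : IsUnit C₂.det) (A : Matrix m n R) (B : Matrix n m R) :
    (A * C₁ * B + C₂).det = C₂.det * (C₁⁻¹ + B * C₂⁻¹ * A).det * C₁.det := by
  rw [add_comm, det_add_mul _ _ hC₂, mul_assoc, ← det_mul, add_mul, nonsing_inv_mul _ hC₁]
  simp only [Matrix.mul_assoc]

theorem inv_mul_mul_add_mulVec_of_inv_mulVec_eq {C₁ : Matrix n n R} {C₂ : Matrix m m R}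
    (hC₁ : IsUnit C₁.det) (hC₂ : IsUnit C₂.det) {A : Matrix m n R} {B : Matrix n m R}
    (hM : IsUnit (A * C₁ * B + C₂).det) {e₁ : n → R} {e₂ : m → R}
    (h : C₁⁻¹ *ᵥ e₁ = B *ᵥ (C₂⁻¹ *ᵥ e₂)) :
    (A * C₁ * B + C₂)⁻¹ *ᵥ (A *ᵥ e₁ + e₂) = C₂⁻¹ *ᵥ e₂ := by
  have : (A * C₁ * B + C₂) *ᵥ (C₂⁻¹ *ᵥ e₂) = A *ᵥ e₁ + e₂ := by
    rw [add_mulVec, ← mulVec_mulVec, ← mulVec_mulVec, ← h]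
    simp only [mulVec_mulVec, mul_nonsing_inv _ hC₁, mul_nonsing_inv _ hC₂, one_mulVec]
  rw [← this, mulVec_mulVec, nonsing_inv_mul _ hM, one_mulVec]

theorem gaussian_exponents_add_eq {C₁ : Matrix n n R} {C₂ : Matrix m m R} (hC₁ : C₁.IsSymm)
    (hC₂ : C₂.IsSymm) (hC₁u : IsUnit C₁.det) (hC₂u : IsUnit C₂.det) {A : Matrix m n R}
    (hM : IsUnit (A * C₁ * Aᵀ + C₂).det) {μ μ₁ : n → R} {μ₂ : m → R}
    (hμ : (C₁⁻¹ + Aᵀ * C₂⁻¹ * A) *ᵥ μ = C₁⁻¹ *ᵥ μ₁ + Aᵀ *ᵥ (C₂⁻¹ *ᵥ μ₂)) (x : n → R) :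
    (x - μ₁) ⬝ᵥ C₁⁻¹ *ᵥ (x - μ₁) + (A *ᵥ x - μ₂) ⬝ᵥ C₂⁻¹ *ᵥ (A *ᵥ x - μ₂) =
      (μ₂ - A *ᵥ μ₁) ⬝ᵥ (A * C₁ * Aᵀ + C₂)⁻¹ *ᵥ (μ₂ - A *ᵥ μ₁) +
        (x - μ) ⬝ᵥ (C₁⁻¹ + Aᵀ * C₂⁻¹ * A) *ᵥ (x - μ) := by
  have hmean := mulVec_sub_eq_of_add_mul_mul_mulVec_eq hμ
  have hx₁ : x - μ₁ = (x - μ) + (μ - μ₁) := by abel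
  have hx₂ : A *ᵥ x - μ₂ = A *ᵥ (x - μ) - (μ₂ - A *ᵥ μ) := by rw [mulVec_sub]; abel
  have hres : μ₂ - A *ᵥ μ₁ = A *ᵥ (μ - μ₁) + (μ₂ - A *ᵥ μ) := by rw [mulVec_sub]; abel
  rw [hx₁, hx₂, dotProduct_mulVec_add_dotProduct_mulVec_eq hC₁.inv hC₂.inv A _ _ hmean, hres,
    inv_mul_mul_add_mulVec_of_inv_mulVec_eq hC₁u hC₂u hM hmean]

end Matrix

theorem Matrix.PosDef.add_mul_mul_transpose {m n : Type*} [Fintype m] [Fintype n]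
    {C : Matrix m m ℝ} {D : Matrix n n ℝ} (hC : C.PosDef) (hD : D.PosSemidef)
    (A : Matrix m n ℝ) : (C + A * D * Aᵀ).PosDef :=
  hC.add_posSemidef (by simpa using hD.mul_mul_conjTranspose_same A)

theorem gaussPDF_mul_gaussPDF {d e : ℕ} {C : Matrix (Fin d) (Fin d) ℝ}
    {C' : Matrix (Fin e) (Fin e) ℝ} (hC : 0 ≤ C.det) (hC' : 0 ≤ C'.det) (μ x : Fin d → ℝ)
    (μ' x' : Fin e → ℝ) :
    gaussPDF μ C x * gaussPDF μ' C' x' =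
      (2 * π) ^ (-(d : ℝ) / 2) * (2 * π) ^ (-(e : ℝ) / 2) * (C.det * C'.det) ^ (-(1 : ℝ) / 2) *
        exp (-((x - μ) ⬝ᵥ C⁻¹ *ᵥ (x - μ) + (x' - μ') ⬝ᵥ C'⁻¹ *ᵥ (x' - μ')) / 2) := by
  rw [gaussPDF, gaussPDF, mul_rpow hC hC', neg_add, add_div, exp_add]
  ring

theorem gaussian_reproduction_lemma {n m : ℕ}
    (C1 : Matrix (Fin n) (Fin n) ℝ) (C2 : Matrix (Fin m) (Fin m) ℝ)
    (A : Matrix (Fin m) (Fin n) ℝ) (μ1 : Fin n → ℝ) (μ2 : Fin m → ℝ)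
    (hC1 : C1.PosDef) (hC2 : C2.PosDef)
    (C3 : Matrix (Fin n) (Fin n) ℝ) (μ3 : Fin n → ℝ)
    (hC3 : C3 = (C1⁻¹ + Aᵀ * C2⁻¹ * A)⁻¹)
    (hμ3 : μ3 = C3 *ᵥ (C1⁻¹ *ᵥ μ1 + Aᵀ *ᵥ (C2⁻¹ *ᵥ μ2))) :
    ∀ x : Fin n → ℝ,
      gaussPDF μ1 C1 x * gaussPDF μ2 C2 (A *ᵥ x) =
        gaussPDF (A *ᵥ μ1) (A * C1 * Aᵀ + C2) μ2 * gaussPDF μ3 C3 x := by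
  intro x
  have hM : (A * C1 * Aᵀ + C2).PosDef :=
    add_comm C2 _ ▸ hC2.add_mul_mul_transpose hC1.posSemidef A
  have hK : (C1⁻¹ + Aᵀ * C2⁻¹ * A).PosDef := by
    simpa using hC1.inv.add_mul_mul_transpose hC2.inv.posSemidef Aᵀ
  have hC1u := hC1.det_pos.ne'.isUnit
  have hC2u := hC2.det_pos.ne'.isUnit
  have hKu := hK.det_pos.ne'.isUnit
  have hC3inv : C3⁻¹ = C1⁻¹ + Aᵀ * C2⁻¹ * A := hC3 ▸ nonsing_inv_nonsing_inv _ hKu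
  have hμ : (C1⁻¹ + Aᵀ * C2⁻¹ * A) *ᵥ μ3 = C1⁻¹ *ᵥ μ1 + Aᵀ *ᵥ (C2⁻¹ *ᵥ μ2) := by
    rw [hμ3, hC3, mulVec_mulVec, mul_nonsing_inv _ hKu, one_mulVec]
  have hdet : C1.det * C2.det = (A * C1 * Aᵀ + C2).det * C3.det := by
    rw [det_mul_mul_add hC1u hC2u, hC3, det_nonsing_inv, Ring.inverse_eq_inv']
    field_simp [hK.det_pos.ne']
  rw [gaussPDF_mul_gaussPDF hC1.det_pos.le hC2.det_pos.le,
    gaussPDF_mul_gaussPDF hM.det_pos.le (hC3 ▸ hK.inv).det_pos.le, hdet, hC3inv,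
    gaussian_exponents_add_eq (isHermitian_iff_isSymm.mp hC1.isHermitian)
      (isHermitian_iff_isSymm.mp hC2.isHermitian) hC1u hC2u hM.det_pos.ne'.isUnit hμ]
  ring
end

section
/- Equivalence of extrinsic variance formulas: with C_v symmetric positive definite m×m, A ∈ ℝ^{m×n} with columns a_1,…,a_n, diagonal positive definite C_p = Diag(τ_{p_1},…,τ_{p_n}), and C = (AᵀC_v^{-1}A + C_p^{-1})^{-1}, define τ̂_n = e_nᵀ C e_n. Then (1/τ̂_n − 1/τ_{p_n})^{-1} = [a_nᵀ (C_v + A_{\bar n} C_{p,\bar n} A_{\bar n}ᵀ)^{-1} a_n]^{-1}, where A_{\bar n} is A with column n removed and C_{p,\bar n} is C_p with row/column n removed, provided 1/τ̂_n − 1/τ_{p_n} ≠ 0. -/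
/-!
By the Woodbury identity, `C = C_p - C_p Aᵀ M⁻¹ A C_p` with `M = C_v + A C_p Aᵀ`, so
`τ̂ = τ - τ² aᵀ M⁻¹ a` for the last column `a` and `τ = τ_{p_n}`. Splitting the last column off,
`M = B + τ a aᵀ` with `B = C_v + Ā C̄_p Āᵀ`, and Sherman–Morrison gives `aᵀ M⁻¹ a = s / (1 + τ s)`
with `s = aᵀ B⁻¹ a ≥ 0`. Hence `τ̂ = τ / (1 + τ s)`, i.e. `1/τ̂ - 1/τ = s`.
-/

open Matrix

namespace Matrix

variable {ι κ R : Type*}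

theorem mul_diagonal_mul_transpose_eq_castSucc_add [CommSemiring R] {n : ℕ}
    (A : Matrix ι (Fin (n + 1)) R) (d : Fin (n + 1) → R) :
    A * diagonal d * Aᵀ =
      A.submatrix id Fin.castSucc * diagonal (fun k : Fin n => d k.castSucc) *
          (A.submatrix id Fin.castSucc)ᵀ +
        d (Fin.last n) • vecMulVec (Aᵀ (Fin.last n)) (Aᵀ (Fin.last n)) := by
  ext i j
  rw [Matrix.add_apply, mul_apply, mul_apply]
  simp [mul_diagonal, Fin.sum_univ_castSucc, vecMulVec_apply]
  ring

variable [Fintype ι]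

theorem transpose_mul_mul_apply_self [CommSemiring R] (A : Matrix ι κ R) (X : Matrix ι ι R)
    (k : κ) : (Aᵀ * X * A) k k = Aᵀ k ⬝ᵥ (X *ᵥ Aᵀ k) := by
  simp only [mul_apply, dotProduct, mulVec, transpose_apply, Finset.sum_mul, Finset.mul_sum]
  rw [Finset.sum_comm]
  simp only [mul_assoc]

theorem PosDef.add_mul_diagonal_mul_transpose [Fintype κ] [DecidableEq κ] [Ring R]
    [PartialOrder R] [StarRing R] [StarOrderedRing R] [TrivialStar R] {S : Matrix ι ι R}
    (hS : S.PosDef) (A : Matrix ι κ R) {d : κ → R} (hd : ∀ k, 0 ≤ d k) :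
    (S + A * diagonal d * Aᵀ).PosDef := by
  simpa only [conjTranspose_eq_transpose_of_trivial] using
    hS.add_posSemidef ((posSemidef_diagonal_iff.mpr hd).mul_mul_conjTranspose_same A)

variable [DecidableEq ι] {K : Type*} [Field K]

theorem dotProduct_inv_add_smul_vecMulVec_mulVec {B : Matrix ι ι K} (hB : IsUnit B) (a : ι → K)
    (t : K) (hM : IsUnit (B + t • vecMulVec a a)) (h : 1 + t * (a ⬝ᵥ (B⁻¹ *ᵥ a)) ≠ 0) :
    a ⬝ᵥ ((B + t • vecMulVec a a)⁻¹ *ᵥ a) =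
      a ⬝ᵥ (B⁻¹ *ᵥ a) / (1 + t * (a ⬝ᵥ (B⁻¹ *ᵥ a))) := by
  set s := a ⬝ᵥ (B⁻¹ *ᵥ a)
  set M := B + t • vecMulVec a a
  have hsolve : M *ᵥ (B⁻¹ *ᵥ a) = (1 + t * s) • a := by
    rw [add_mulVec, mulVec_mulVec, mul_nonsing_inv _ ((isUnit_iff_isUnit_det B).mp hB),
      one_mulVec, smul_mulVec, vecMulVec_mulVec]
    simp [add_smul, smul_smul, s]
  have hinv : M⁻¹ *ᵥ a = (1 + t * s)⁻¹ • (B⁻¹ *ᵥ a) := calc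
    M⁻¹ *ᵥ a = (1 + t * s)⁻¹ • M⁻¹ *ᵥ ((1 + t * s) • a) := by
      rw [mulVec_smul, smul_smul, inv_mul_cancel₀ h, one_smul]
    _ = (1 + t * s)⁻¹ • (B⁻¹ *ᵥ a) := by
      rw [← hsolve, mulVec_mulVec, nonsing_inv_mul _ ((isUnit_iff_isUnit_det _).mp hM),
        one_mulVec]
  rw [hinv, dotProduct_smul, smul_eq_mul, inv_mul_eq_div]

theorem inv_transpose_mul_inv_mul_add_inv_diagonal_apply [Fintype κ] [DecidableEq κ]
    {S : Matrix ι ι K} (hS : IsUnit S) (A : Matrix ι κ K) {d : κ → K} (hd : ∀ k, d k ≠ 0)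
    (hM : IsUnit (S + A * diagonal d * Aᵀ)) (k : κ) :
    (Aᵀ * S⁻¹ * A + (diagonal d)⁻¹)⁻¹ k k =
      d k - d k ^ 2 * (Aᵀ k ⬝ᵥ ((S + A * diagonal d * Aᵀ)⁻¹ *ᵥ Aᵀ k)) := by
  have hD : IsUnit (diagonal d) := by
    simpa [isUnit_iff_isUnit_det, Finset.prod_ne_zero_iff] using hd
  have hSS : S⁻¹⁻¹ = S := nonsing_inv_nonsing_inv _ ((isUnit_iff_isUnit_det _).mp hS)
  have hDD : (diagonal d)⁻¹⁻¹ = diagonal d :=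
    nonsing_inv_nonsing_inv _ ((isUnit_iff_isUnit_det _).mp hD)
  rw [add_comm, add_mul_mul_inv_eq_sub _ _ _ _ (isUnit_nonsing_inv_iff.mpr hD)
    (isUnit_nonsing_inv_iff.mpr hS) (by rwa [hSS, hDD]), hSS, hDD]
  have hassoc (X : Matrix ι ι K) :
      diagonal d * Aᵀ * X * A * diagonal d = diagonal d * (Aᵀ * X * A) * diagonal d := by
    simp only [Matrix.mul_assoc]
  rw [hassoc, sub_apply, mul_diagonal, diagonal_mul, transpose_mul_mul_apply_self,
    diagonal_apply_eq]
  ring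

end Matrix

theorem one_div_sub_sq_mul_div_sub_one_div {K : Type*} [Field K] {τ s : K} (hτ : τ ≠ 0)
    (h : 1 + τ * s ≠ 0) : 1 / (τ - τ ^ 2 * (s / (1 + τ * s))) - 1 / τ = s := by
  have : τ - τ ^ 2 * (s / (1 + τ * s)) = τ / (1 + τ * s) := by field_simp; ring
  rw [this]
  field_simp
  ring

theorem extrinsic_variance_equivalence_general {m n : ℕ}
    (Cv : Matrix (Fin m) (Fin m) ℝ) (hCv : Cv.PosDef)
    (A : Matrix (Fin m) (Fin (n + 1)) ℝ)
    (τp : Fin (n + 1) → ℝ) (hτp : ∀ i, 0 < τp i)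
    (C : Matrix (Fin (n + 1)) (Fin (n + 1)) ℝ)
    (hC : C = (Aᵀ * Cv⁻¹ * A + (Matrix.diagonal τp)⁻¹)⁻¹)
    (e : Fin (n + 1) → ℝ) (he : e = Pi.single (Fin.last n) 1)
    (τhat : ℝ) (hτhat : τhat = e ⬝ᵥ (C *ᵥ e))
    (an : Fin m → ℝ) (han : an = fun i => A i (Fin.last n))
    (Abar : Matrix (Fin m) (Fin n) ℝ) (hAbar : Abar = A.submatrix id Fin.castSucc) :
    (1 / τhat - 1 / τp (Fin.last n))⁻¹ =
      (an ⬝ᵥ ((Cv + Abar * Matrix.diagonal (fun i : Fin n => τp i.castSucc) * Abarᵀ)⁻¹ *ᵥ an))⁻¹ := by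
  subst hC he hτhat han hAbar
  set a := Aᵀ (Fin.last n)
  set B := Cv + A.submatrix id Fin.castSucc * diagonal (fun i : Fin n => τp i.castSucc) *
    (A.submatrix id Fin.castSucc)ᵀ
  have hM := hCv.add_mul_diagonal_mul_transpose A fun k => (hτp k).le
  have hsplit : Cv + A * diagonal τp * Aᵀ = B + τp (Fin.last n) • vecMulVec a a := by
    rw [mul_diagonal_mul_transpose_eq_castSucc_add, add_assoc]
  have hB : B.PosDef := hCv.add_mul_diagonal_mul_transpose _ fun k => (hτp k.castSucc).le
  have hs : 0 ≤ a ⬝ᵥ (B⁻¹ *ᵥ a) := by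
    simpa only [star_trivial] using hB.inv.posSemidef.dotProduct_mulVec_nonneg a
  have hτ := hτp (Fin.last n)
  rw [single_one_dotProduct, mulVec_single_one, col_apply,
    inv_transpose_mul_inv_mul_add_inv_diagonal_apply hCv.isUnit A (fun k => (hτp k).ne')
      hM.isUnit, hsplit,
    dotProduct_inv_add_smul_vecMulVec_mulVec hB.isUnit a _ (hsplit ▸ hM.isUnit) (by positivity),
    one_div_sub_sq_mul_div_sub_one_div hτ.ne' (by positivity)]
  rfl

theorem extrinsic_variance_equivalence {m n : ℕ}
    (Cv : Matrix (Fin m) (Fin m) ℝ) (hCv : Cv.PosDef)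
    (A : Matrix (Fin m) (Fin (n + 1)) ℝ)
    (τp : Fin (n + 1) → ℝ) (hτp : ∀ i, 0 < τp i)
    (C : Matrix (Fin (n + 1)) (Fin (n + 1)) ℝ)
    (hC : C = (Aᵀ * Cv⁻¹ * A + (Matrix.diagonal τp)⁻¹)⁻¹)
    (e : Fin (n + 1) → ℝ) (he : e = Pi.single (Fin.last n) 1)
    (τhat : ℝ) (hτhat : τhat = e ⬝ᵥ (C *ᵥ e))
    (an : Fin m → ℝ) (han : an = fun i => A i (Fin.last n))
    (Abar : Matrix (Fin m) (Fin n) ℝ) (hAbar : Abar = A.submatrix id Fin.castSucc)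
    (hne : 1 / τhat - 1 / τp (Fin.last n) ≠ 0) :
    (1 / τhat - 1 / τp (Fin.last n))⁻¹ =
      (an ⬝ᵥ ((Cv + Abar * Matrix.diagonal (fun i : Fin n => τp i.castSucc) * Abarᵀ)⁻¹ *ᵥ an))⁻¹ :=
  extrinsic_variance_equivalence_general Cv hCv A τp hτp C hC e he τhat hτhat an han Abar hAbar
end
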